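/- arXiv:2510.14306 — 4 statements merged into one kernel-verified Lean document; each statement's English description precedes it below -/
import Mathlib

section
/- For any odd prime p, the polynomial T^8 + p^4 is irreducible over the rational numbers. -/
/-!
Write `X⁸ + t⁴ = f(X²)` with `f = X⁴ + t⁴ = t⁴ Φ₈(X / t)`, which is irreducible because `Φ₈` is.
By Capelli's composition criterion it remains to see that a root `y` of `f` is not a square in
`K(y)`. Negating `y` is an involution `σ` of `K(y)` fixing `j = y² / t²`, a square root of `-1`.
If `b² = y`, then `σ(b)² = -y = (j b)²`, so `σ(b) = ±j b` and `b = σ(σ(b)) = j² b = -b`.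
-/

open Polynomial IntermediateField

theorem not_isSquare_of_involutive {K : Type*} [Field K] [NeZero (2 : K)] {σ : K →+* K}
    (hσ : Function.Involutive σ) {x j : K} (hx : x ≠ 0) (hσx : σ x = -x) (hj : j ^ 2 = -1)
    (hσj : σ j = j) : ¬IsSquare x := by
  rintro ⟨b, rfl⟩
  have hb : b ≠ 0 := by rintro rfl; simp at hx
  have hσb : σ b = j * b ∨ σ b = -(j * b) := by
    rw [← sq_eq_sq_iff_eq_or_eq_neg, ← map_pow, sq, hσx]
    linear_combination (-b ^ 2) * hj
  have hneg : b = -b := by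
    obtain h | h := hσb
    · calc b = σ (σ b) := (hσ b).symm
        _ = j ^ 2 * b := by rw [h, map_mul, hσj, h]; ring
        _ = -b := by rw [hj]; ring
    · calc b = σ (σ b) := (hσ b).symm
        _ = j ^ 2 * b := by rw [h, map_neg, map_mul, hσj, h]; ring
        _ = -b := by rw [hj]; ring
  have h2b : (2 : K) * b = 0 := by linear_combination hneg
  exact hb ((mul_eq_zero.1 h2b).resolve_left two_ne_zero)

theorem exists_involutive_algHom_gen_eq_neg {K E : Type*} [Field K] [Field E] [Algebra K E]
    {x : E} (hx : IsIntegral K x) (hneg : aeval (-x) (minpoly K x) = 0) :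
    ∃ σ : K⟮x⟯ →ₐ[K] K⟮x⟯,
      Function.Involutive σ ∧ σ (AdjoinSimple.gen K x) = -AdjoinSimple.gen K x := by
  let pb := adjoin.powerBasis hx
  have hgen : pb.gen = AdjoinSimple.gen K x := adjoin.powerBasis_gen hx
  have hroot : aeval (-pb.gen) (minpoly K pb.gen) = 0 := by
    rw [hgen, minpoly_gen]
    apply Subtype.val_injective
    rw [← IntermediateField.aeval_coe]
    simpa using hneg
  let σ := pb.lift (-pb.gen) hroot
  have hσ : σ pb.gen = -pb.gen := pb.lift_gen _ hroot
  have hσσ : σ.comp σ = AlgHom.id K K⟮x⟯ := pb.algHom_ext (by simp [hσ])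
  exact ⟨σ, fun b => AlgHom.congr_fun hσσ b, hgen ▸ hσ⟩

theorem irreducible_X_pow_add_C_pow {K : Type*} [Field K] {n : ℕ} {t : K} (ht : t ≠ 0)
    (h : Irreducible (X ^ n + 1 : K[X])) : Irreducible (X ^ n + C (t ^ n)) := by
  let _ := invertibleOfNonzero (inv_ne_zero ht)
  have hscale : X ^ n + C (t ^ n) = C (t ^ n) * algEquivCMulXAddC t⁻¹ 0 (X ^ n + 1) := by
    simp only [algEquivCMulXAddC_apply, map_zero, add_zero, map_add, map_pow, aeval_X, map_one]
    rw [mul_add, mul_one, mul_pow, ← mul_assoc, ← mul_pow, ← C_mul, mul_inv_cancel₀ ht, C_1,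
      one_pow, one_mul]
  rw [hscale, irreducible_isUnit_mul (isUnit_C.2 (pow_ne_zero n ht).isUnit)]
  exact (MulEquiv.irreducible_iff _).2 h

theorem irreducible_X_pow_eight_add_C_pow_four {K : Type*} [Field K] [NeZero (2 : K)] {t : K}
    (ht : t ≠ 0) (h : Irreducible (X ^ 4 + C (t ^ 4) : K[X])) :
    Irreducible (X ^ 8 + C (t ^ 4) : K[X]) := by
  rw [← sub_neg_eq_add, ← map_neg] at h ⊢
  rw [show 8 = 2 * 4 by rfl]
  refine X_pow_mul_sub_C_irreducible h fun E _ _ x hx => ?_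
  have hint : IsIntegral K x := by
    by_contra hx'
    have hdeg := congrArg natDegree hx
    rw [minpoly.eq_zero hx', natDegree_X_pow_sub_C] at hdeg
    exact absurd hdeg (by norm_num)
  obtain ⟨σ, hσ, hσy⟩ := exists_involutive_algHom_gen_eq_neg hint
    (by simpa [hx, Even.neg_pow (by decide : Even 4)] using minpoly.aeval K x)
  set y := AdjoinSimple.gen K x
  set s := algebraMap K K⟮x⟯ t
  have hs : s ≠ 0 := (_root_.map_ne_zero _).2 ht
  have hy : y ^ 4 = -s ^ 4 := by
    have hroot := minpoly.aeval K y
    rw [minpoly_gen, hx] at hroot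
    exact eq_neg_of_add_eq_zero_left (by simpa [s] using hroot)
  have : NeZero (2 : K⟮x⟯) := ⟨by
    rw [← map_ofNat (algebraMap K K⟮x⟯) 2]; exact (_root_.map_ne_zero _).2 two_ne_zero⟩
  apply X_pow_sub_C_irreducible_of_prime Nat.prime_two
  rintro b hb
  refine not_isSquare_of_involutive (σ := σ.toRingHom) hσ (j := y ^ 2 / s ^ 2) ?_ hσy ?_ ?_
    ⟨b, by rw [← hb, sq]⟩
  · rintro h0
    simp [h0, hs] at hy
  · rw [div_pow, ← pow_mul, ← pow_mul, hy]
    field_simp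
  · simp [hσy, s]

theorem cyclotomic_eight_rat : cyclotomic 8 ℚ = X ^ 4 + 1 := by
  rw [show 8 = 2 ^ (2 + 1) by rfl, cyclotomic_prime_pow_eq_geom_sum Nat.prime_two]
  simp only [Finset.sum_range_succ, Finset.sum_range_zero]
  ring

theorem stmt_0_general (p : ℕ) (hp : p.Prime) :
    Irreducible ((X : ℚ[X]) ^ 8 + C ((p : ℚ)) ^ 4) := by
  have hp0 : (p : ℚ) ≠ 0 := by exact_mod_cast hp.ne_zero
  rw [← C_pow]
  refine irreducible_X_pow_eight_add_C_pow_four hp0 (irreducible_X_pow_add_C_pow hp0 ?_)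
  rw [← cyclotomic_eight_rat]
  exact cyclotomic.irreducible_rat (by norm_num)

theorem stmt_0 (p : ℕ) (hp : p.Prime) (hodd : Odd p) :
    Irreducible ((X : ℚ[X]) ^ 8 + C ((p : ℚ)) ^ 4) :=
  stmt_0_general p hp
end

section
/- For a prime p congruent to 1 modulo 4, the polynomial (T^{2p} - p^p)/(T^2 - p) factors over ℚ as a product of exactly two irreducible polynomials, each of degree p - 1. -/
open Polynomial IntermediateField

private lemma monic_dvd_eq {A B : ℚ[X]} (hA : A.Monic) (hB : B.Monic) (h : A ∣ B)
    (hd : B.natDegree ≤ A.natDegree) : A = B := by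
  obtain ⟨c, rfl⟩ := h
  have hc : c ≠ 0 := by
    rintro rfl; rw [mul_zero] at hB; exact (Monic.ne_zero hB) rfl
  have hdeg : (A * c).natDegree = A.natDegree + c.natDegree :=
    natDegree_mul hA.ne_zero hc
  have hc0 : c.natDegree = 0 := by omega
  have hcl : c.leadingCoeff = 1 := by
    have := hB.leadingCoeff
    rwa [leadingCoeff_mul, hA.leadingCoeff, one_mul] at this
  have : c = 1 := by
    rw [eq_C_of_natDegree_eq_zero hc0] at hcl ⊢
    rw [leadingCoeff_C] at hcl
    rw [hcl, map_one]
  rw [this, mul_one]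

private lemma sum_range_two_mul {M : Type*} [AddCommMonoid M] (n : ℕ) (t : ℕ → M) :
    ∑ k ∈ Finset.range (2 * n), t k
      = ∑ i ∈ Finset.range n, t (2 * i) + ∑ i ∈ Finset.range n, t (2 * i + 1) := by
  induction n with
  | zero => simp
  | succ n ih =>
      have h2 : 2 * (n + 1) = (2 * n) + 1 + 1 := by ring
      rw [h2, Finset.sum_range_succ, Finset.sum_range_succ, ih,
        Finset.sum_range_succ (fun i => t (2 * i)), Finset.sum_range_succ (fun i => t (2 * i + 1))]
      abel

private lemma coeff_comp_neg_X (f : ℚ[X]) (n : ℕ) :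
    (f.comp (-X)).coeff n = (-1) ^ n * f.coeff n := by
  have h : f.comp (-X)
      = ∑ i ∈ Finset.range (f.natDegree + 1), C ((-1) ^ i * f.coeff i) * X ^ i := by
    rw [comp, eval₂_eq_sum_range]
    refine Finset.sum_congr rfl fun i _ => ?_
    have : (-X : ℚ[X]) ^ i = C ((-1) ^ i) * X ^ i := by
      rw [neg_pow, ← C_1, ← C_neg, ← C_pow]
    rw [this, map_mul]
    ring
  rw [h, finset_sum_coeff]
  simp only [coeff_C_mul, coeff_X_pow, mul_ite, mul_zero]
  simp only [eq_comm (a := n), mul_one]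
  rw [Finset.sum_ite_eq' (Finset.range (f.natDegree + 1)) n]
  split_ifs with hn
  · rfl
  · rw [Finset.mem_range, not_lt] at hn
    rw [coeff_eq_zero_of_natDegree_lt (by omega), mul_zero]

theorem stmt_4 (p : ℕ) (hp : p.Prime) (hmod : p % 4 = 1) :
    ∃ f g : ℚ[X], Irreducible f ∧ Irreducible g ∧
      f.natDegree = p - 1 ∧ g.natDegree = p - 1 ∧
      ((X : ℚ[X]) ^ (2 * p) - C ((p : ℚ)) ^ p)
        = ((X : ℚ[X]) ^ 2 - C ((p : ℚ))) * (f * g) := by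
  haveI : Fact p.Prime := ⟨hp⟩
  haveI : NeZero p := ⟨hp.ne_zero⟩
  have hp5 : 5 ≤ p := by have := hp.two_le; omega
  set P : ℚ[X] := X ^ (2 * p) - C ((p : ℚ)) ^ p with hP_def
  set q : ℚ[X] := X ^ 2 - C ((p : ℚ)) with hq_def
  -- the primitive root
  obtain ⟨ζ, hζ⟩ : ∃ ζ : ℂ, IsPrimitiveRoot ζ p :=
    ⟨Complex.exp (2 * Real.pi * Complex.I / p), Complex.isPrimitiveRoot_exp p hp.ne_zero⟩
  have hζint : IsIntegral ℚ ζ := by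
    refine ⟨X ^ p - C 1, monic_X_pow_sub_C _ hp.ne_zero, ?_⟩
    rw [← aeval_def]
    simp [hζ.pow_eq_one]
  set s : ℂ := ((Real.sqrt p : ℝ) : ℂ) with hs_def
  have hs2 : s ^ 2 = (p : ℂ) := by
    rw [hs_def, ← Complex.ofReal_pow, Real.sq_sqrt (by positivity)]
    simp
  set K := ℚ⟮ζ⟯ with hK_def
  haveI : FiniteDimensional ℚ K := IntermediateField.adjoin.finiteDimensional hζint
  have hζK : ζ ∈ K := IntermediateField.mem_adjoin_simple_self ℚ ζ
  -- Gauss sum: √p ∈ K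
  have hsK : s ∈ K := by
    have hζp : ζ ^ p = 1 := hζ.pow_eq_one
    set χ : MulChar (ZMod p) ℂ := (quadraticChar (ZMod p)).ringHomComp (Int.castRingHom ℂ)
      with hχ
    set ψ : AddChar (ZMod p) ℂ := AddChar.zmodChar p hζp with hψdef
    have hψ : ψ.IsPrimitive := AddChar.zmodChar_primitive_of_primitive_root p hζ
    have hRC : ringChar (ZMod p) ≠ 2 := by
      rw [ZMod.ringChar_zmod_n]; omega
    have hχ1 : χ ≠ 1 := by
      intro h
      rw [hχ, MulChar.ringHomComp_eq_one_iff Int.cast_injective] at h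
      exact quadraticChar_ne_one hRC h
    have hχq : χ.IsQuadratic := (quadraticChar_isQuadratic (ZMod p)).comp _
    have hg2 : gaussSum χ ψ ^ 2 = (p : ℂ) := by
      rw [gaussSum_sq hχ1 hχq hψ]
      have hneg : χ (-1) = 1 := by
        have h4 : quadraticChar (ZMod p) (-1) = 1 := by
          rw [quadraticChar_neg_one hRC, ZMod.card, ZMod.χ₄_nat_eq_if_mod_four]
          simp [hmod]
          omega
        rw [hχ]
        show ((quadraticChar (ZMod p) (-1) : ℤ) : ℂ) = 1
        rw [h4]; norm_num
      rw [hneg, one_mul, ZMod.card]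
    have hgK : gaussSum χ ψ ∈ K := by
      show ∑ a : ZMod p, χ a * ψ a ∈ K
      refine sum_mem fun a _ => mul_mem ?_ ?_
      · rw [hχ, MulChar.ringHomComp_apply]
        exact intCast_mem K _
      · rw [hψdef, AddChar.zmodChar_apply]
        exact pow_mem hζK _
    have h0 : (gaussSum χ ψ - s) * (gaussSum χ ψ + s) = 0 := by
      have h1 : gaussSum χ ψ ^ 2 - s ^ 2 = 0 := by rw [hg2, hs2, sub_self]
      linear_combination h1
    rcases mul_eq_zero.mp h0 with h | h
    · exact (sub_eq_zero.mp h) ▸ hgK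
    · have : s = -gaussSum χ ψ := by linear_combination h
      rw [this]
      exact neg_mem hgK
  have hfinK : Module.finrank ℚ K = p - 1 := by
    rw [hK_def, IntermediateField.adjoin.finrank hζint,
      ← Polynomial.cyclotomic_eq_minpoly_rat hζ hp.pos, natDegree_cyclotomic,
      Nat.totient_prime hp]
  set α : ℂ := s * ζ with hα_def
  have hαK : α ∈ K := mul_mem hsK hζK
  have hζ2 : IsPrimitiveRoot (ζ ^ 2) p :=
    hζ.pow_of_coprime 2 (Nat.coprime_comm.mp (hp.coprime_iff_not_dvd.mpr
      (fun h => absurd (Nat.le_of_dvd (by norm_num) h) (by omega))))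
  have hζ2deg : (minpoly ℚ (ζ ^ 2)).natDegree = p - 1 := by
    rw [← Polynomial.cyclotomic_eq_minpoly_rat hζ2 hp.pos, natDegree_cyclotomic,
      Nat.totient_prime hp]
  -- key degree lemma
  have key : ∀ x : ℂ, x ∈ K → ζ ^ 2 ∈ ℚ⟮x⟯ → IsIntegral ℚ x →
      (minpoly ℚ x).natDegree = p - 1 := by
    intro x hxK hζ2x hint
    haveI : FiniteDimensional ℚ ℚ⟮x⟯ := IntermediateField.adjoin.finiteDimensional hint
    have hle : (minpoly ℚ x).natDegree ≤ p - 1 := by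
      have h1 : minpoly ℚ ((⟨x, hxK⟩ : K) : ℂ) = minpoly ℚ (⟨x, hxK⟩ : K) :=
        minpoly.algebraMap_eq (A := ℚ) (B := K) (B' := ℂ) (algebraMap K ℂ).injective ⟨x, hxK⟩
      calc (minpoly ℚ x).natDegree = (minpoly ℚ (⟨x, hxK⟩ : K)).natDegree := by rw [← h1]
        _ ≤ Module.finrank ℚ K := minpoly.natDegree_le _
        _ = p - 1 := hfinK
    have hge : p - 1 ≤ (minpoly ℚ x).natDegree := by
      have h1 : minpoly ℚ ((⟨ζ ^ 2, hζ2x⟩ : ℚ⟮x⟯) : ℂ) = minpoly ℚ (⟨ζ ^ 2, hζ2x⟩ : ℚ⟮x⟯) :=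
        minpoly.algebraMap_eq (A := ℚ) (B := ℚ⟮x⟯) (B' := ℂ)
          (algebraMap ℚ⟮x⟯ ℂ).injective ⟨ζ ^ 2, hζ2x⟩
      calc p - 1 = (minpoly ℚ (ζ ^ 2)).natDegree := hζ2deg.symm
        _ = (minpoly ℚ (⟨ζ ^ 2, hζ2x⟩ : ℚ⟮x⟯)).natDegree := by rw [← h1]
        _ ≤ Module.finrank ℚ ℚ⟮x⟯ := minpoly.natDegree_le _
        _ = (minpoly ℚ x).natDegree := IntermediateField.adjoin.finrank hint
    omega
  -- roots of P
  have hpC : (p : ℂ) ≠ 0 := Nat.cast_ne_zero.mpr hp.ne_zero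
  have hPm : P.Monic := by
    have h1 : P = X ^ (2 * p) - C ((p : ℚ) ^ p) := by rw [hP_def, map_pow]
    rw [h1]; exact monic_X_pow_sub_C _ (by omega)
  have haevalP : ∀ x : ℂ, x ^ (2 * p) = (p : ℂ) ^ p → aeval x P = 0 := by
    intro x hx
    rw [hP_def]
    simp only [map_sub, map_pow, aeval_X, aeval_C]
    rw [hx]
    push_cast
    ring
  have hs2p : s ^ (2 * p) = (p : ℂ) ^ p := by rw [pow_mul, hs2]
  have hζ2p : ζ ^ (2 * p) = 1 := by rw [mul_comm, pow_mul, hζ.pow_eq_one, one_pow]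
  have hroot_α : α ^ (2 * p) = (p : ℂ) ^ p := by
    rw [hα_def, mul_pow, hs2p, hζ2p, mul_one]
  have hroot_nα : (-α) ^ (2 * p) = (p : ℂ) ^ p := by
    rw [(even_two_mul p).neg_pow, hroot_α]
  have hαint : IsIntegral ℚ α := ⟨P, hPm, by rw [← aeval_def]; exact haevalP α hroot_α⟩
  have hnαint : IsIntegral ℚ (-α) := ⟨P, hPm, by rw [← aeval_def]; exact haevalP _ hroot_nα⟩
  set f := minpoly ℚ α with hf_def
  set g := minpoly ℚ (-α) with hg_def
  have hfm : f.Monic := minpoly.monic hαint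
  have hgm : g.Monic := minpoly.monic hnαint
  have hfi : Irreducible f := minpoly.irreducible hαint
  have hgi : Irreducible g := minpoly.irreducible hnαint
  have hα2 : α ^ 2 = (p : ℂ) * ζ ^ 2 := by rw [hα_def, mul_pow, hs2]
  have hmemζ2 : ∀ x : ℂ, x ^ 2 = α ^ 2 → ζ ^ 2 ∈ ℚ⟮x⟯ := by
    intro x hx
    have h1 : ζ ^ 2 = (p : ℂ)⁻¹ * x ^ 2 := by
      rw [hx, hα2]
      field_simp
    rw [h1]
    exact mul_mem (inv_mem (_root_.natCast_mem _ p)) (pow_mem (mem_adjoin_simple_self ℚ x) 2)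
  have hdf : f.natDegree = p - 1 := key α hαK (hmemζ2 α rfl) hαint
  have hdg : g.natDegree = p - 1 := key (-α) (neg_mem hαK) (hmemζ2 (-α) (by ring)) hnαint
  -- the quadratic factor is the minimal polynomial of √p
  have hqm : q.Monic := monic_X_pow_sub_C _ two_ne_zero
  have hq2 : q.natDegree = 2 := natDegree_X_pow_sub_C
  have haevq : aeval s q = 0 := by
    rw [hq_def]
    simp only [map_sub, map_pow, aeval_X, aeval_C]
    rw [hs2]
    push_cast
    ring
  have hsint : IsIntegral ℚ s := ⟨q, hqm, by rw [← aeval_def]; exact haevq⟩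
  have hq_eq : minpoly ℚ s = q := by
    have hdvd : minpoly ℚ s ∣ q := minpoly.dvd ℚ s haevq
    have hd2 : (minpoly ℚ s).natDegree ≤ 2 := hq2 ▸ natDegree_le_of_dvd hdvd hqm.ne_zero
    have hd2' : 2 ≤ (minpoly ℚ s).natDegree := by
      rw [minpoly.two_le_natDegree_iff hsint]
      rintro ⟨c, hc⟩
      have hcr : ((c : ℝ) : ℂ) = s := by
        rw [← hc]
        push_cast
        rfl
      rw [hs_def] at hcr
      exact hp.irrational_sqrt ⟨c, Complex.ofReal_inj.mp hcr⟩
    exact monic_dvd_eq (minpoly.monic hsint) hqm hdvd (by omega)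
  have hqi : Irreducible q := hq_eq ▸ minpoly.irreducible hsint
  have hq_dvd : q ∣ P := hq_eq ▸ minpoly.dvd ℚ s (haevalP s hs2p)
  have hf_dvd : f ∣ P := minpoly.dvd ℚ α (haevalP α hroot_α)
  have hg_dvd : g ∣ P := minpoly.dvd ℚ (-α) (haevalP _ hroot_nα)
  -- f ≠ g
  have hne_fg : f ≠ g := by
    intro hfg
    have hevendeg : Even (p - 1) := by rw [Nat.even_iff]; omega
    have hcm : (f.comp (-X)).Monic := by
      have h1 : (-X : ℚ[X]).natDegree = 1 := by simp
      unfold Monic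
      rw [leadingCoeff_comp (by rw [h1]; omega), hfm.leadingCoeff, one_mul,
        leadingCoeff, h1, coeff_neg, coeff_X_one, hdf]
      exact hevendeg.neg_one_pow
    have hcd : (f.comp (-X)).natDegree = p - 1 := by
      rw [natDegree_comp, hdf]
      simp
    have hgdvd : g ∣ f.comp (-X) := by
      refine minpoly.dvd ℚ (-α) ?_
      rw [aeval_comp]
      have h1 : aeval (-α) (-X : ℚ[X]) = α := by simp
      rw [h1, hf_def]
      exact minpoly.aeval ℚ α
    have hfe : f.comp (-X) = f := by
      have h1 : g = f.comp (-X) := monic_dvd_eq hgm hcm hgdvd (by omega)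
      rw [← h1, hfg]
    have hoddc : ∀ n, n % 2 = 1 → f.coeff n = 0 := by
      intro n hn
      have h1 := coeff_comp_neg_X f n
      rw [hfe, Odd.neg_one_pow (Nat.odd_iff.mpr hn)] at h1
      linarith
    set m := (p - 1) / 2 with hm_def
    have h2m : 2 * m = p - 1 := by omega
    set h : ℚ[X] := ∑ i ∈ Finset.range (m + 1), C (f.coeff (2 * i)) * X ^ i with hh_def
    have hhcomp : h.comp (X ^ 2) = f := by
      have h1 : h.comp (X ^ 2)
          = ∑ i ∈ Finset.range (m + 1), C (f.coeff (2 * i)) * X ^ (2 * i) := by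
        rw [hh_def, comp, eval₂_finset_sum]
        refine Finset.sum_congr rfl fun i _ => ?_
        rw [eval₂_mul, eval₂_C, eval₂_X_pow, ← pow_mul]
      have h2 : f = ∑ i ∈ Finset.range (2 * (m + 1)), C (f.coeff i) * X ^ i := by
        conv_lhs => rw [f.as_sum_range' (2 * (m + 1)) (by omega)]
        exact Finset.sum_congr rfl fun i _ => (C_mul_X_pow_eq_monomial).symm
      have hodd0 : ∑ i ∈ Finset.range (m + 1), C (f.coeff (2 * i + 1)) * X ^ (2 * i + 1)
          = (0 : ℚ[X]) := by
        refine Finset.sum_eq_zero fun i _ => ?_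
        rw [hoddc _ (by omega), map_zero, zero_mul]
      rw [h1]
      conv_rhs => rw [h2, sum_range_two_mul (m + 1) (fun i => C (f.coeff i) * X ^ i)]
      rw [hodd0, add_zero]
    have hh0 : h ≠ 0 := by
      intro h0
      have hcm : h.coeff m = f.coeff (2 * m) := by
        rw [hh_def, finset_sum_coeff]
        simp only [coeff_C_mul, coeff_X_pow, mul_ite, mul_one, mul_zero]
        simp only [eq_comm (a := m)]
        rw [Finset.sum_ite_eq' (Finset.range (m + 1)) m]
        simp
      rw [h0, coeff_zero, h2m, ← hdf, hfm.coeff_natDegree] at hcm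
      exact one_ne_zero hcm.symm
    have hhd : h.natDegree ≤ m := by
      rw [hh_def]
      refine natDegree_sum_le_of_forall_le _ _ fun i hi => ?_
      exact le_trans (natDegree_C_mul_X_pow_le _ _) (by
        rw [Finset.mem_range] at hi; omega)
    have hα2int : IsIntegral ℚ (α ^ 2) := hαint.pow 2
    have hdα2 : (minpoly ℚ (α ^ 2)).natDegree = p - 1 := by
      refine key _ (pow_mem hαK 2) ?_ hα2int
      have h1 : ζ ^ 2 = (p : ℂ)⁻¹ * α ^ 2 := by
        rw [hα2]
        field_simp
      rw [h1]
      exact mul_mem (inv_mem (_root_.natCast_mem _ p)) (mem_adjoin_simple_self ℚ (α ^ 2))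
    have hmdvd : minpoly ℚ (α ^ 2) ∣ h := by
      refine minpoly.dvd ℚ _ ?_
      have h1 : aeval α (h.comp (X ^ 2)) = 0 := by
        rw [hhcomp, hf_def]
        exact minpoly.aeval ℚ α
      rwa [aeval_comp, map_pow, aeval_X] at h1
    have hle := natDegree_le_of_dvd hmdvd hh0
    omega
  -- coprimality and conclusion
  have hcop : ∀ A B : ℚ[X], Irreducible A → Irreducible B → A.Monic → B.Monic → A ≠ B →
      IsCoprime A B := fun A B hA hB hAm hBm hAB =>
    hA.coprime_iff_not_dvd.mpr fun hdvd =>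
      hAB (eq_of_monic_of_associated hAm hBm (hA.associated_of_dvd hB hdvd))
  have hqf : q ≠ f := fun h => by rw [← h, hq2] at hdf; omega
  have hqg : q ≠ g := fun h => by rw [← h, hq2] at hdg; omega
  have hdvd_all : q * (f * g) ∣ P :=
    IsCoprime.mul_dvd
      (IsCoprime.mul_right (hcop q f hqi hfi hqm hfm hqf) (hcop q g hqi hgi hqm hgm hqg))
      hq_dvd
      (IsCoprime.mul_dvd (hcop f g hfi hgi hfm hgm hne_fg) hf_dvd hg_dvd)
  have hPdeg : P.natDegree = 2 * p := by
    have h1 : P = X ^ (2 * p) - C ((p : ℚ) ^ p) := by rw [hP_def, map_pow]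
    rw [h1, natDegree_X_pow_sub_C]
  have hQdeg : (q * (f * g)).natDegree = 2 * p := by
    rw [natDegree_mul hqm.ne_zero (mul_ne_zero hfm.ne_zero hgm.ne_zero),
      natDegree_mul hfm.ne_zero hgm.ne_zero, hq2, hdf, hdg]
    omega
  have hfinal : q * (f * g) = P :=
    monic_dvd_eq (hqm.mul (hfm.mul hgm)) hPm hdvd_all (by omega)
  exact ⟨f, g, hfi, hgi, hdf, hdg, hfinal.symm⟩
end

section
/- For any prime p congruent to 1 modulo 4, the polynomial T^{2p} - p^p factors over ℚ as (T^2 - p) times two irreducible polynomials of degree p - 1; in particular T^2 - p divides T^{2p} - p^p. -/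
/-!
Let `Q = (X ^ (2p) - p ^ p) / (X ^ 2 - p)`. A complex root `z` of `Q` satisfies `z ^ 2 = p ζ` with
`ζ` a primitive `p`-th root of unity (`z ^ 2 ≠ p` because `X ^ (2p) - p ^ p` is separable).
For `p ≡ 1 (mod 4)` the quadratic Gauss sum is a square root of `p` in `ℚ(ζ)`, and
`ζ = (ζ ^ ((p + 1) / 2)) ^ 2`, so `z ∈ ℚ(ζ)`; conversely `ζ = z ^ 2 / p`. Hence `ℚ(z) = ℚ(ζ)` has
degree `p - 1`, so every irreducible factor of `Q`, which has degree `2 (p - 1)`, has degree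
`p - 1`, and there are exactly two of them.
-/

open Polynomial IntermediateField

theorem IsPrimitiveRoot.exists_sq_eq_prime {R : Type*} [CommRing R] [IsDomain R] [CharZero R]
    {p : ℕ} [Fact p.Prime] (hmod : p % 4 = 1) {ζ : R} (hζ : IsPrimitiveRoot ζ p) :
    ∃ g : R, g ^ 2 = p := by
  have hp2 : ringChar (ZMod p) ≠ 2 := by rw [ZMod.ringChar_zmod_n]; omega
  let χ : MulChar (ZMod p) R := (quadraticChar (ZMod p)).ringHomComp (Int.castRingHom R)
  have hχ : χ ≠ 1 :=
    (MulChar.ringHomComp_ne_one_iff Int.cast_injective).mpr (quadraticChar_ne_one hp2)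
  have hχ_neg_one : χ (-1) = 1 := by
    simp [χ, MulChar.ringHomComp_apply, quadraticChar_neg_one hp2, ZMod.card,
      ZMod.χ₄_nat_one_mod_four hmod]
  refine ⟨gaussSum χ (AddChar.zmodChar p hζ.pow_eq_one), ?_⟩
  rw [gaussSum_sq hχ ((quadraticChar_isQuadratic _).comp _)
    (AddChar.zmodChar_primitive_of_primitive_root p hζ), hχ_neg_one, one_mul, ZMod.card]

section Adjoin

variable {L : Type*} [Field L] [CharZero L] {p : ℕ} [Fact p.Prime] {z ζ : L}

theorem adjoin_simple_eq_of_sq_eq_mul_primitiveRoot (hmod : p % 4 = 1)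
    (hζ : IsPrimitiveRoot ζ p) (hz : z ^ 2 = p * ζ) : ℚ⟮z⟯ = ℚ⟮ζ⟯ := by
  have hp : (p : L) ≠ 0 := NeZero.ne _
  apply le_antisymm <;> rw [adjoin_simple_le_iff]
  · obtain ⟨g, hg⟩ := (IsPrimitiveRoot.of_map_of_injective (f := algebraMap ℚ⟮ζ⟯ L)
      (ζ := AdjoinSimple.gen ℚ ζ) hζ (algebraMap ℚ⟮ζ⟯ L).injective).exists_sq_eq_prime hmod
    let w : ℚ⟮ζ⟯ := g * AdjoinSimple.gen ℚ ζ ^ ((p + 1) / 2)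
    have hw : (w : L) ^ 2 = z ^ 2 := by
      have hg' : (g : L) ^ 2 = p := by simpa using congrArg (algebraMap ℚ⟮ζ⟯ L) hg
      have hodd : (p + 1) / 2 * 2 = p + 1 := by omega
      simp only [w, MulMemClass.coe_mul, SubmonoidClass.coe_pow, AdjoinSimple.coe_gen]
      rw [mul_pow, hg', ← pow_mul, hodd, pow_succ, hζ.pow_eq_one, one_mul, hz]
    rcases sq_eq_sq_iff_eq_or_eq_neg.mp hw.symm with h | h
    · exact h ▸ w.2
    · exact h ▸ neg_mem w.2
  · have : ζ = (p : L)⁻¹ * z ^ 2 := by rw [hz, inv_mul_cancel_left₀ hp]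
    exact this ▸ mul_mem (inv_mem (IntermediateField.natCast_mem _ p))
      (pow_mem (mem_adjoin_simple_self ℚ z) 2)

theorem finrank_adjoin_simple_of_sq_eq_mul_primitiveRoot (hmod : p % 4 = 1)
    (hζ : IsPrimitiveRoot ζ p) (hz : z ^ 2 = p * ζ) : Module.finrank ℚ ℚ⟮z⟯ = p - 1 := by
  have hp : p.Prime := Fact.out
  rw [adjoin_simple_eq_of_sq_eq_mul_primitiveRoot hmod hζ hz,
    adjoin.finrank (hζ.isIntegral hp.pos).tower_top, ← cyclotomic_eq_minpoly_rat hζ hp.pos,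
    natDegree_cyclotomic, Nat.totient_prime hp]

end Adjoin

section Polynomial

theorem X_sq_sub_C_dvd_X_pow_sub_C_pow {R : Type*} [CommRing R] (c : R) (n : ℕ) :
    X ^ 2 - C c ∣ X ^ (2 * n) - C c ^ n := by
  simpa [pow_mul] using sub_dvd_pow_sub_pow (X ^ 2 : R[X]) (C c) n

variable {K : Type*} [Field K] {c : K} {n : ℕ} {Q : K[X]}

theorem natDegree_eq_of_X_sq_sub_C_mul_eq (hn : n ≠ 0)
    (hQ : (X ^ 2 - C c) * Q = X ^ (2 * n) - C c ^ n) : Q.natDegree = 2 * (n - 1) := by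
  have hR : (X ^ (2 * n) - C c ^ n : K[X]).natDegree = 2 * n := by
    rw [← C_pow, natDegree_X_pow_sub_C]
  have hQ0 : Q ≠ 0 := by
    rintro rfl
    rw [mul_zero] at hQ
    rw [← hQ, natDegree_zero] at hR
    omega
  have := congrArg natDegree hQ
  rw [(monic_X_pow_sub_C c two_ne_zero).natDegree_mul' hQ0, natDegree_X_pow_sub_C, hR] at this
  omega

theorem aeval_X_sq_sub_C_ne_zero_of_aeval_eq_zero [CharZero K] {L : Type*} [Field L]
    [Algebra K L] (hc : c ≠ 0) (hn : n ≠ 0) (hQ : (X ^ 2 - C c) * Q = X ^ (2 * n) - C c ^ n)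
    {z : L} (hz : aeval z Q = 0) : z ^ 2 ≠ algebraMap K L c := by
  have hsep : ((X ^ 2 - C c) * Q).Separable := by
    rw [hQ, ← C_pow]
    exact separable_X_pow_sub_C _ (by exact_mod_cast (by omega : 2 * n ≠ 0)) (pow_ne_zero n hc)
  simpa [hz, sub_eq_zero] using aeval_ne_zero_of_isCoprime hsep.isCoprime z

theorem irreducible_of_dvd_of_natDegree_eq {d : ℕ} (hd : d ≠ 0)
    (h : ∀ r : K[X], Irreducible r → r ∣ Q → r.natDegree = d) {g : K[X]} (hgQ : g ∣ Q)
    (hg : g.natDegree = d) : Irreducible g := by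
  have hg0 : g ≠ 0 := by rintro rfl; simp_all
  obtain ⟨r, hr, k, rfl⟩ := WfDvdMonoid.exists_irreducible_factor
    (not_isUnit_of_natDegree_pos _ (by omega)) hg0
  have hk : k.natDegree = 0 := by
    have := natDegree_mul hr.ne_zero (right_ne_zero_of_mul hg0)
    rw [h r hr (dvd_of_mul_right_dvd hgQ)] at this
    omega
  rwa [irreducible_mul_isUnit (isUnit_iff_degree_eq_zero.mpr
    (degree_eq_iff_natDegree_eq (right_ne_zero_of_mul hg0) |>.mpr hk))]

theorem exists_irreducible_mul_eq_of_forall_natDegree_eq {d : ℕ} (hd : d ≠ 0)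
    (hQd : Q.natDegree = 2 * d) (h : ∀ r : K[X], Irreducible r → r ∣ Q → r.natDegree = d) :
    ∃ f g : K[X], Irreducible f ∧ Irreducible g ∧ f.natDegree = d ∧ g.natDegree = d ∧
      Q = f * g := by
  have hQ0 : Q ≠ 0 := by rintro rfl; simp at hQd; omega
  obtain ⟨f, hf, g, rfl⟩ := WfDvdMonoid.exists_irreducible_factor
    (not_isUnit_of_natDegree_pos _ (by omega)) hQ0
  have hfd := h f hf (dvd_mul_right f g)
  have hgd : g.natDegree = d := by
    rw [natDegree_mul hf.ne_zero (right_ne_zero_of_mul hQ0), hfd] at hQd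
    omega
  exact ⟨f, g, hf, irreducible_of_dvd_of_natDegree_eq hd h (dvd_mul_left g f) hgd, hfd, hgd, rfl⟩

end Polynomial

theorem natDegree_eq_of_irreducible_dvd_of_X_sq_sub_C_mul_eq {p : ℕ} [Fact p.Prime]
    (hmod : p % 4 = 1) {Q : ℚ[X]} (hQ : (X ^ 2 - C (p : ℚ)) * Q = X ^ (2 * p) - C (p : ℚ) ^ p)
    {r : ℚ[X]} (hr : Irreducible r) (hrQ : r ∣ Q) : r.natDegree = p - 1 := by
  have hp : p.Prime := Fact.out
  have hp0 : (p : ℂ) ≠ 0 := NeZero.ne _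
  obtain ⟨z, hz⟩ := IsAlgClosed.exists_aeval_eq_zero ℂ r hr.degree_pos.ne'
  have hQz : aeval z Q = 0 := by
    obtain ⟨s, rfl⟩ := hrQ
    rw [map_mul, hz, zero_mul]
  have hpow : z ^ (2 * p) = (p : ℂ) ^ p := by
    have := congrArg (aeval z) hQ
    simp only [map_mul, hQz, mul_zero, map_sub, map_pow, aeval_X, aeval_C] at this
    exact sub_eq_zero.mp (by simpa using this.symm)
  have hsq : z ^ 2 ≠ p := by
    simpa using aeval_X_sq_sub_C_ne_zero_of_aeval_eq_zero (Nat.cast_ne_zero.mpr hp.ne_zero)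
      hp.ne_zero hQ hQz
  have hζ : IsPrimitiveRoot (z ^ 2 / p) p :=
    IsPrimitiveRoot.iff_orderOf.mpr <| orderOf_eq_prime
      (by rw [div_pow, ← pow_mul, hpow, div_self (pow_ne_zero p hp0)])
      (by rwa [Ne, div_eq_one_iff_eq hp0])
  calc r.natDegree = (minpoly ℚ z).natDegree := by
        rw [← minpoly.eq_of_irreducible hr hz,
          natDegree_mul_C (inv_ne_zero (leadingCoeff_ne_zero.mpr hr.ne_zero))]
    _ = Module.finrank ℚ ℚ⟮z⟯ := (adjoin.finrank (IsAlgebraic.isIntegral ⟨r, hr.ne_zero, hz⟩)).symm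
    _ = p - 1 := finrank_adjoin_simple_of_sq_eq_mul_primitiveRoot hmod hζ (by field_simp)

theorem stmt_5 (p : ℕ) (hp : p.Prime) (hmod : p % 4 = 1) :
    (((X : ℚ[X]) ^ 2 - C ((p : ℚ))) ∣ ((X : ℚ[X]) ^ (2 * p) - C ((p : ℚ)) ^ p)) ∧
    ∃ f g : ℚ[X], Irreducible f ∧ Irreducible g ∧
      f.natDegree = p - 1 ∧ g.natDegree = p - 1 ∧
      ((X : ℚ[X]) ^ (2 * p) - C ((p : ℚ)) ^ p)
        = ((X : ℚ[X]) ^ 2 - C ((p : ℚ))) * (f * g) := by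
  have := Fact.mk hp
  obtain ⟨Q, hQ⟩ := X_sq_sub_C_dvd_X_pow_sub_C_pow (p : ℚ) p
  obtain ⟨f, g, hf, hg, hfd, hgd, rfl⟩ := exists_irreducible_mul_eq_of_forall_natDegree_eq
    (Nat.sub_ne_zero_of_lt hp.one_lt) (natDegree_eq_of_X_sq_sub_C_mul_eq hp.ne_zero hQ.symm)
    fun r hr hrQ ↦ natDegree_eq_of_irreducible_dvd_of_X_sq_sub_C_mul_eq hmod hQ.symm hr hrQ
  exact ⟨⟨_, hQ⟩, f, g, hf, hg, hfd, hgd, hQ⟩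
end

section
/- For a prime p ≠ 3, p ≠ 2, the polynomial T^8 - p^2 T^4 + p^4 is irreducible over ℚ, and its roots are exactly the numbers ζ_8^{2m+1} ζ_3^{±1} √p for m = 0,1,2,3, where ζ_8 and ζ_3 are primitive 8th and 3rd roots of unity. -/
/-!
Writing `X² = p·Y` turns the polynomial into `p⁴ Φ₁₂(Y)`, so it has a root `α` with
`α² = p ζ`, where `ζ = (√3 - i)/2` is a primitive 12th root of unity. Then `ℚ(α)` contains
`E = ℚ(√3, i)`, of degree 4, and `p ζ` is not a square in `E`: otherwise `2p` would be a square
in `E`, which is ruled out by descending the tower of quadratic extensions `ℚ ⊂ ℚ(√3) ⊂ E`, since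
an element of `F` that becomes a square in `F(√d)` is a square or `d` times a square in `F`.
Hence `[ℚ(α) : ℚ] = 8`. The roots are read off from
`X⁸ - p²X⁴ + p⁴ = (X⁴ + (ζ₃ √p)⁴)(X⁴ + (ζ₃⁻¹ √p)⁴)`.
-/

open Polynomial IntermediateField Module Complex

section QuadraticExtension

variable {F K : Type*} [Field F] [Field K] [Algebra F K] {δ : K} {d : F}

theorem exists_eq_add_mul_of_mem_adjoin_simple (hδ : δ ^ 2 = algebraMap F K d) {x : K}
    (hx : x ∈ F⟮δ⟯) : ∃ u v : F, x = algebraMap F K u + algebraMap F K v * δ := by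
  have hroot : aeval δ (X ^ 2 - C d) = 0 := by simp [hδ]
  have hmonic : (X ^ 2 - C d : F[X]).Monic := monic_X_pow_sub_C d two_ne_zero
  rw [← mem_toSubalgebra, adjoin_simple_toSubalgebra_of_isAlgebraic
    ⟨_, hmonic.ne_zero, hroot⟩, Algebra.adjoin_singleton_eq_range_aeval] at hx
  obtain ⟨q, rfl⟩ := hx
  have hdeg : (q %ₘ (X ^ 2 - C d)).degree ≤ 1 := by
    have := degree_modByMonic_lt q hmonic
    rw [degree_X_pow_sub_C two_pos] at this
    exact Order.le_of_lt_succ this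
  refine ⟨(q %ₘ (X ^ 2 - C d)).coeff 0, (q %ₘ (X ^ 2 - C d)).coeff 1, ?_⟩
  rw [AlgHom.toRingHom_eq_coe, RingHom.coe_coe, ← aeval_modByMonic_eq_self_of_root hroot,
    eq_X_add_C_of_degree_le_one hdeg]
  simp [add_comm]

theorem isSquare_or_isSquare_mul_of_isSquare_algebraMap [NeZero (2 : F)]
    (hδ : δ ^ 2 = algebraMap F K d) {c : F} (hc : IsSquare (algebraMap F F⟮δ⟯ c)) :
    IsSquare c ∨ IsSquare (c * d) := by
  obtain ⟨⟨x, hx⟩, hxc⟩ := hc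
  have hxc : algebraMap F K c = x * x := congrArg Subtype.val hxc
  obtain ⟨u, v, rfl⟩ := exists_eq_add_mul_of_mem_adjoin_simple hδ hx
  by_cases hv : v = 0
  · exact .inl ⟨u, (algebraMap F K).injective (by simp [hxc, hv])⟩
  by_cases hu : u = 0
  · exact .inr ⟨v * d, (algebraMap F K).injective (by
      simp only [map_mul, hxc, hu, map_zero, zero_add, ← hδ]; ring)⟩
  -- otherwise the cross term `2 u v δ` of `(u + v δ)²` puts `δ` in `F`
  have hδF : δ = algebraMap F K ((c - u ^ 2 - v ^ 2 * d) / (2 * u * v)) := by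
    rw [map_div₀, eq_div_iff
      ((_root_.map_ne_zero _).2 (mul_ne_zero (mul_ne_zero two_ne_zero hu) hv))]
    simp only [map_sub, map_mul, map_pow, map_ofNat, hxc, ← hδ]
    ring
  exact .inl ⟨u + v * ((c - u ^ 2 - v ^ 2 * d) / (2 * u * v)),
    (algebraMap F K).injective (by rw [hxc, hδF]; simp)⟩

theorem finrank_adjoin_simple_eq_two (hδ : δ ^ 2 = algebraMap F K d) (hd : ¬IsSquare d) :
    finrank F F⟮δ⟯ = 2 := by
  have hirr : Irreducible (X ^ 2 - C d) := X_pow_sub_C_irreducible_of_prime Nat.prime_two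
    fun b hb => hd ⟨b, by rw [← hb, sq]⟩
  have hroot : aeval δ (X ^ 2 - C d) = 0 := by simp [hδ]
  have hmonic : (X ^ 2 - C d : F[X]).Monic := monic_X_pow_sub_C d two_ne_zero
  rw [adjoin.finrank ⟨_, hmonic, by rwa [← aeval_def]⟩,
    ← minpoly.eq_of_irreducible_of_monic hirr hroot hmonic, natDegree_X_pow_sub_C]

end QuadraticExtension

theorem not_isSquare_intCast_mul_prime {p : ℕ} (hp : p.Prime) {k : ℤ} (hk : ¬(p : ℤ) ∣ k) :
    ¬IsSquare ((k : ℚ) * p) := by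
  rw [← Int.cast_natCast, ← Int.cast_mul, Rat.isSquare_intCast_iff]
  rintro ⟨t, ht⟩
  have hp' : Prime (p : ℤ) := Nat.prime_iff_prime_int.mp hp
  obtain ⟨u, rfl⟩ : (p : ℤ) ∣ t := by
    rcases hp'.dvd_or_dvd (⟨k, by rw [← ht]; ring⟩ : (p : ℤ) ∣ t * t) with h | h <;> exact h
  exact hk ⟨u * u, mul_right_cancel₀ hp'.ne_zero (by rw [ht]; ring)⟩

theorem ofReal_sqrt_three_sq : ((√3 : ℝ) : ℂ) ^ 2 = algebraMap ℚ ℂ 3 := by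
  rw [← ofReal_pow, Real.sq_sqrt (by norm_num)]
  simp

theorem I_sq_eq_algebraMap_neg_one {F : Type*} [Field F] [Algebra F ℂ] :
    I ^ 2 = algebraMap F ℂ (-1) := by
  simp

theorem finrank_adjoin_sqrt_three_I : finrank ℚ ℚ⟮((√3 : ℝ) : ℂ), I⟯ = 4 := by
  have hI : ¬IsSquare (-1 : ℚ⟮((√3 : ℝ) : ℂ)⟯) := by
    rw [show (-1 : ℚ⟮((√3 : ℝ) : ℂ)⟯) = algebraMap ℚ _ (-1) by simp]
    intro h
    rcases isSquare_or_isSquare_mul_of_isSquare_algebraMap ofReal_sqrt_three_sq h with h | h <;>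
      norm_num at h
  rw [← adjoin_simple_adjoin_simple]
  refine (finrank_mul_finrank ℚ ℚ⟮((√3 : ℝ) : ℂ)⟯ ℚ⟮((√3 : ℝ) : ℂ)⟯⟮I⟯).symm.trans ?_
  rw [finrank_adjoin_simple_eq_two ofReal_sqrt_three_sq (by norm_num),
    finrank_adjoin_simple_eq_two I_sq_eq_algebraMap_neg_one hI]

theorem sq_ne_two_mul_prime_of_mem_adjoin_sqrt_three_I {p : ℕ} (hp : p.Prime) (hp2 : p ≠ 2)
    (hp3 : p ≠ 3) {y : ℂ} (hy : y ∈ ℚ⟮((√3 : ℝ) : ℂ), I⟯) : y ^ 2 ≠ 2 * p := by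
  have hp6 : ∀ k : ℤ, k ∣ 6 → ∀ q : ℚ, q = k * p → ¬IsSquare q := by
    rintro k hk _ rfl
    refine not_isSquare_intCast_mul_prime hp fun hpk => ?_
    rcases hp.dvd_mul.1 (Int.natCast_dvd_natCast.1 (hpk.trans hk) : p ∣ 2 * 3) with h | h
    · exact hp2 ((Nat.prime_dvd_prime_iff_eq hp Nat.prime_two).1 h)
    · exact hp3 ((Nat.prime_dvd_prime_iff_eq hp Nat.prime_three).1 h)
  rw [← adjoin_simple_adjoin_simple] at hy
  intro hy2
  have hsq : IsSquare (algebraMap ℚ⟮((√3 : ℝ) : ℂ)⟯ ℚ⟮((√3 : ℝ) : ℂ)⟯⟮I⟯ (2 * p)) := by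
    refine ⟨⟨y, hy⟩, Subtype.ext ?_⟩
    change algebraMap ℚ⟮((√3 : ℝ) : ℂ)⟯ ℂ (2 * p) = y * y
    rw [← sq, hy2, map_mul, map_ofNat, map_natCast]
  rcases isSquare_or_isSquare_mul_of_isSquare_algebraMap I_sq_eq_algebraMap_neg_one hsq
    with h | h
  · rcases isSquare_or_isSquare_mul_of_isSquare_algebraMap ofReal_sqrt_three_sq (c := 2 * p)
      (by simpa using h) with h | h
    · exact hp6 2 (by norm_num) _ (by push_cast; ring) h
    · exact hp6 6 (by norm_num) _ (by push_cast; ring) h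
  · rcases isSquare_or_isSquare_mul_of_isSquare_algebraMap ofReal_sqrt_three_sq (c := -(2 * p))
      (by simpa using h) with h | h
    · exact hp6 (-2) (by norm_num) _ (by push_cast; ring) h
    · exact hp6 (-6) (by norm_num) _ (by push_cast; ring) h

theorem irreducible_X_pow_eight_sub_sq_mul_X_pow_four_add_pow_four {p : ℕ} (hp : p.Prime)
    (hp2 : p ≠ 2) (hp3 : p ≠ 3) :
    Irreducible ((X : ℚ[X]) ^ 8 - C (p : ℚ) ^ 2 * X ^ 4 + C (p : ℚ) ^ 4) := by
  set f : ℚ[X] := X ^ 8 - C (p : ℚ) ^ 2 * X ^ 4 + C (p : ℚ) ^ 4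
  set E := ℚ⟮((√3 : ℝ) : ℂ), I⟯
  set ζ : ℂ := (((√3 : ℝ) : ℂ) - I) / 2
  have h3 : ((√3 : ℝ) : ℂ) ^ 2 = 3 := by simpa using ofReal_sqrt_three_sq
  have hζ3 : ζ ^ 3 = -I := by
    linear_combination ((((√3 : ℝ) : ℂ) - 3 * I) * h3 + (3 * ((√3 : ℝ) : ℂ) - I) * I_sq) / 8
  have hIE : I ∈ E := subset_adjoin _ _ (by simp)
  have hζE : ζ ∈ E := div_mem (sub_mem (subset_adjoin _ _ (by simp)) hIE) (ofNat_mem _ 2)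
  obtain ⟨α, hα⟩ := IsAlgClosed.exists_pow_nat_eq ((p : ℂ) * ζ) two_pos
  have hfα : aeval α f = 0 := by
    have : α ^ 8 - (p : ℂ) ^ 2 * α ^ 4 + (p : ℂ) ^ 4 = 0 := by
      rw [show α ^ 8 = (α ^ 2) ^ 4 by ring, show α ^ 4 = (α ^ 2) ^ 2 by ring, hα]
      linear_combination (p : ℂ) ^ 4 * (ζ * hζ3 + (I_sq - h3) / 4)
    simpa [f] using this
  have hEα : E ≤ ℚ⟮α⟯ := by
    have hζ : ζ ∈ ℚ⟮α⟯ := by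
      have hp0 : (p : ℂ) ≠ 0 := Nat.cast_ne_zero.2 hp.ne_zero
      rw [show ζ = α ^ 2 / p by rw [hα]; field_simp]
      exact div_mem (pow_mem (mem_adjoin_simple_self ℚ α) 2) (IntermediateField.natCast_mem _ p)
    have hI : I ∈ ℚ⟮α⟯ := by
      rw [show I = -ζ ^ 3 by rw [hζ3, neg_neg]]
      exact neg_mem (pow_mem hζ 3)
    rw [adjoin_le_iff, Set.insert_subset_iff, Set.singleton_subset_iff]
    refine ⟨?_, hI⟩
    rw [show ((√3 : ℝ) : ℂ) = 2 * ζ + I by simp only [ζ]; ring]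
    exact add_mem (mul_mem (ofNat_mem _ 2) hζ) hI
  have hpζ : ¬IsSquare (⟨p * ζ, mul_mem (IntermediateField.natCast_mem E p) hζE⟩ : E) := by
    rintro ⟨w, hw⟩
    have hw : (w : ℂ) * w = p * ζ := (congrArg Subtype.val hw).symm
    -- `(w (1 + i) ζ)² = p ζ · 2i · ζ² = 2p`, as `ζ³ = -i`
    refine sq_ne_two_mul_prime_of_mem_adjoin_sqrt_three_I hp hp2 hp3
      (mul_mem (mul_mem w.2 (add_mem (one_mem E) hIE)) hζE) ?_
    linear_combination (1 + I) ^ 2 * ζ ^ 2 * hw + 2 * p * I * hζ3 + (p * ζ ^ 3 - 2 * p) * I_sq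
  have hrank : finrank ℚ ℚ⟮α⟯ = 8 := by
    rw [← sup_eq_right.2 hEα, ← restrictScalars_adjoin_eq_sup]
    refine (finrank_mul_finrank ℚ E E⟮α⟯).symm.trans ?_
    rw [finrank_adjoin_sqrt_three_I, finrank_adjoin_simple_eq_two hα hpζ]
  have hmonic : f.Monic := by simp only [f]; monicity!
  have hint : IsIntegral ℚ α := ⟨f, hmonic, by rwa [← aeval_def]⟩
  rw [minpoly.unique_of_degree_le_degree_minpoly ℚ α hmonic hfα (by
    rw [degree_eq_natDegree (minpoly.ne_zero hint), ← adjoin.finrank hint, hrank]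
    simp only [f]; compute_degree!)]
  exact minpoly.irreducible hint

theorem pow_four_add_pow_four_eq_prod {R : Type*} [CommRing R] {a : R} (ha : a ^ 4 = -1)
    (z c : R) : z ^ 4 + c ^ 4 = ∏ m : Fin 4, (z - a ^ (2 * (m : ℕ) + 1) * c) := by
  rw [Fin.prod_univ_four]
  change _ = (z - a ^ 1 * c) * (z - a ^ 3 * c) * (z - a ^ 5 * c) * (z - a ^ 7 * c)
  rw [show a ^ 5 = -a by linear_combination a * ha,
    show a ^ 7 = -a ^ 3 by linear_combination a ^ 3 * ha]
  linear_combination (z ^ 2 * c ^ 2 * a ^ 2 - c ^ 4 * (a ^ 4 - 1)) * ha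

theorem setOf_pow_eight_sub_sq_mul_pow_four_add_pow_four_eq_zero {K : Type*} [Field K] {a b : K}
    (ha : a ^ 4 = -1) (hb : b ^ 2 + b + 1 = 0) {c s : K} (hs : s ^ 2 = c) :
    {z : K | z ^ 8 - c ^ 2 * z ^ 4 + c ^ 4 = 0} =
      {z : K | ∃ m : Fin 4, z = a ^ (2 * (m : ℕ) + 1) * b * s ∨
        z = a ^ (2 * (m : ℕ) + 1) * b⁻¹ * s} := by
  have hb' : b⁻¹ = b ^ 2 := inv_eq_of_mul_eq_one_right (by linear_combination (b - 1) * hb)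
  have hfactor (z : K) :
      z ^ 8 - c ^ 2 * z ^ 4 + c ^ 4 = (z ^ 4 + (b * s) ^ 4) * (z ^ 4 + (b⁻¹ * s) ^ 4) := by
    rw [hb']
    linear_combination (-(z ^ 4 * s ^ 4 * (b ^ 6 - b ^ 5 + b ^ 3 - b + 1)) -
      s ^ 8 * (b - 1) * (b ^ 9 + b ^ 6 + b ^ 3 + 1)) * hb +
      (z ^ 4 * (s ^ 2 + c) - (s ^ 2 + c) * (s ^ 4 + c ^ 2)) * hs
  ext z
  simp only [Set.mem_ofPred_eq, hfactor, mul_eq_zero, pow_four_add_pow_four_eq_prod ha,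
    Finset.prod_eq_zero_iff, Finset.mem_univ, true_and, sub_eq_zero, mul_assoc, exists_or]

theorem stmt_17 (p : ℕ) (hp : p.Prime) (hp2 : p ≠ 2) (hp3 : p ≠ 3) :
    Irreducible ((X : ℚ[X]) ^ 8 - C ((p : ℚ)) ^ 2 * X ^ 4 + C ((p : ℚ)) ^ 4) ∧
    {z : ℂ | z ^ 8 - (p : ℂ) ^ 2 * z ^ 4 + (p : ℂ) ^ 4 = 0}
      = {z : ℂ | ∃ m : Fin 4,
          z = Complex.exp (2 * Real.pi * Complex.I / 8) ^ (2 * (m : ℕ) + 1) *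
              Complex.exp (2 * Real.pi * Complex.I / 3) * (Real.sqrt p : ℂ) ∨
          z = Complex.exp (2 * Real.pi * Complex.I / 8) ^ (2 * (m : ℕ) + 1) *
              (Complex.exp (2 * Real.pi * Complex.I / 3))⁻¹ * (Real.sqrt p : ℂ)} := by
  refine ⟨irreducible_X_pow_eight_sub_sq_mul_X_pow_four_add_pow_four hp hp2 hp3, ?_⟩
  have ha : exp (2 * Real.pi * I / 8) ^ 4 = -1 :=
    ((isPrimitiveRoot_exp 8 (by norm_num)).pow_of_dvd (p := 4) (by norm_num)
      (by norm_num)).eq_neg_one_of_two_right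
  have hb : exp (2 * Real.pi * I / 3) ^ 2 + exp (2 * Real.pi * I / 3) + 1 = 0 := by
    simpa only [Finset.sum_range_succ, Finset.range_one, Finset.sum_singleton, pow_zero, pow_one,
      Nat.cast_ofNat, add_comm, add_assoc] using
      (isPrimitiveRoot_exp 3 (by norm_num)).geom_sum_eq_zero (by norm_num)
  exact setOf_pow_eight_sub_sq_mul_pow_four_add_pow_four_eq_zero ha hb
    (by rw [← ofReal_pow, Real.sq_sqrt (Nat.cast_nonneg p), ofReal_natCast])
end
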